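/- Under the canonical form hypotheses, write Z_N = W_2 R_{22} + W_3 R_{32} with R_{22} invertible (which holds since [Z_N Z_C] spans N(K) and Z_C spans Z_c). Then Z_N^T K_G Z_N = R_{22}^T Λ_2 R_{22}; in particular Z_N^T K_G Z_N is nonsingular and has the same numbers of positive and negative eigenvalues as Λ_2. -/

import Mathlib

/-!
Because `W` brings `K_G` to the block form `diag(Λ₁, Λ₂, 0)` and `Z_N = W [0; R₂₂; R₃₂]`, the
product `Z_Nᵀ K_G Z_N` collapses to `R₂₂ᵀ Λ₂ R₂₂`. The inertia statement is Sylvester's law of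
inertia: the quadratic forms of congruent matrices are isometric, a real symmetric matrix is
congruent (through its orthogonal eigenvector matrix) to the diagonal matrix of its eigenvalues,
and isometric weighted sums of squares have the same numbers of positive and negative weights.
-/

open Matrix QuadraticMap QuadraticForm

namespace Matrix

variable {n R : Type*} [Fintype n] [DecidableEq n]

theorem equivalent_toQuadraticForm'_transpose_mul_mul [CommRing R] {M P : Matrix n n R}
    (hP : IsUnit P) : (Pᵀ * M * P).toQuadraticForm'.Equivalent M.toQuadraticForm' := by
  obtain ⟨u, rfl⟩ := hP
  let := u.invertible
  refine ⟨{ toLinearEquiv := toLinearEquiv' u this, map_app' := fun x => ?_ }⟩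
  simp only [toQuadraticForm', LinearMap.BilinMap.toQuadraticMap_apply, toLinearMap₂'_apply']
  rw [← mulVec_mulVec, ← mulVec_mulVec, dotProduct_mulVec x _ᵀ, vecMul_transpose]
  rfl

theorem toQuadraticForm'_diagonal [CommRing R] (w : n → R) :
    (diagonal w).toQuadraticForm' = weightedSumSquares R w := by
  ext x
  simp only [toQuadraticForm', LinearMap.BilinMap.toQuadraticMap_apply, toLinearMap₂'_apply',
    weightedSumSquares_apply, dotProduct, mulVec_diagonal, smul_eq_mul]
  exact Finset.sum_congr rfl fun i _ => by ring

namespace IsHermitian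

variable {A : Matrix n n ℝ} (hA : A.IsHermitian)

theorem equivalent_weightedSumSquares_eigenvalues :
    A.toQuadraticForm'.Equivalent (weightedSumSquares ℝ hA.eigenvalues) := by
  set U : Matrix n n ℝ := (hA.eigenvectorUnitary : Matrix n n ℝ)
  have hA' : A = (star U)ᵀ * diagonal hA.eigenvalues * star U := by
    conv_lhs => rw [hA.spectral_theorem]
    simp [U, star_eq_conjTranspose, conjTranspose_eq_transpose_of_trivial,
      RCLike.ofReal_real_eq_id]
  have h := equivalent_toQuadraticForm'_transpose_mul_mul (M := diagonal hA.eigenvalues)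
    (Unitary.isUnit_coe (U := hA.eigenvectorUnitary)).star
  rwa [← hA', toQuadraticForm'_diagonal] at h

variable {ι : Type*} [Fintype ι] {w : ι → ℝ}

theorem ncard_pos_eigenvalues_eq_of_equivalent
    (h : A.toQuadraticForm'.Equivalent (weightedSumSquares ℝ w)) :
    {i | 0 < hA.eigenvalues i}.ncard = {i | 0 < w i}.ncard :=
  (sigPos_of_equiv_weightedSumSquares hA.equivalent_weightedSumSquares_eigenvalues).symm.trans
    (sigPos_of_equiv_weightedSumSquares h)

theorem ncard_neg_eigenvalues_eq_of_equivalent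
    (h : A.toQuadraticForm'.Equivalent (weightedSumSquares ℝ w)) :
    {i | hA.eigenvalues i < 0}.ncard = {i | w i < 0}.ncard :=
  (sigNeg_of_equiv_weightedSumSquares hA.equivalent_weightedSumSquares_eigenvalues).symm.trans
    (sigNeg_of_equiv_weightedSumSquares h)

end IsHermitian

end Matrix

theorem stmt17_general {n1 n2 n3 : ℕ}
    (KG : Matrix (Fin n1 ⊕ (Fin n2 ⊕ Fin n3)) (Fin n1 ⊕ (Fin n2 ⊕ Fin n3)) ℝ)
    (W : Matrix (Fin n1 ⊕ (Fin n2 ⊕ Fin n3)) (Fin n1 ⊕ (Fin n2 ⊕ Fin n3)) ℝ)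
    (Λ1 : Fin n1 → ℝ) (Λ2 : Fin n2 → ℝ) (hΛ2 : ∀ i, Λ2 i ≠ 0)
    (hcanKG : Wᵀ * KG * W
      = Matrix.fromBlocks (Matrix.diagonal Λ1) 0 0
          (Matrix.fromBlocks (Matrix.diagonal Λ2) 0 0 0))
    (ZN : Matrix (Fin n1 ⊕ (Fin n2 ⊕ Fin n3)) (Fin n2) ℝ)
    (R22 : Matrix (Fin n2) (Fin n2) ℝ) (R32 : Matrix (Fin n3) (Fin n2) ℝ)
    (hR22 : IsUnit R22)
    (hZN : ZN = W.submatrix id (Sum.inr ∘ Sum.inl : Fin n2 → _) * R22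
      + W.submatrix id (Sum.inr ∘ Sum.inr : Fin n3 → _) * R32) :
    ZNᵀ * KG * ZN = R22ᵀ * Matrix.diagonal Λ2 * R22 ∧
    IsUnit (ZNᵀ * KG * ZN) ∧
    ∀ h : (ZNᵀ * KG * ZN).IsHermitian,
      Nat.card {i // 0 < h.eigenvalues i} = Nat.card {i // 0 < Λ2 i} ∧
      Nat.card {i // h.eigenvalues i < 0} = Nat.card {i // Λ2 i < 0} := by
  set Y := fromRows (0 : Matrix (Fin n1) (Fin n2) ℝ) (fromRows R22 R32)
  have hZN' : ZN = W * Y := by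
    ext i j
    simp [hZN, Y, mul_apply]
  have hmain : ZNᵀ * KG * ZN = R22ᵀ * diagonal Λ2 * R22 := by
    have hcongr : ZNᵀ * KG * ZN = Yᵀ * (Wᵀ * KG * W) * Y := by
      simp only [hZN', transpose_mul, Matrix.mul_assoc]
    rw [hcongr, hcanKG]
    simp [Y, fromBlocks_mul_fromRows, transpose_fromRows, fromCols_mul_fromRows, Matrix.mul_assoc]
  have hD : IsUnit (diagonal Λ2) :=
    isUnit_diagonal.mpr (Pi.isUnit_iff.mpr fun i => (hΛ2 i).isUnit)
  refine ⟨hmain, hmain ▸ (((isUnit_transpose R22).mpr hR22).mul hD).mul hR22, fun h => ?_⟩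
  have hQ : (ZNᵀ * KG * ZN).toQuadraticForm'.Equivalent (weightedSumSquares ℝ Λ2) := by
    rw [hmain, ← toQuadraticForm'_diagonal]
    exact equivalent_toQuadraticForm'_transpose_mul_mul hR22
  exact ⟨h.ncard_pos_eigenvalues_eq_of_equivalent hQ, h.ncard_neg_eigenvalues_eq_of_equivalent hQ⟩

/-- Under the canonical form hypotheses, with Z_N = W₂R₂₂ + W₃R₃₂ and
R₂₂ invertible, one has Z_Nᵀ K_G Z_N = R₂₂ᵀ Λ₂ R₂₂; in particular Z_Nᵀ K_G Z_N is
nonsingular and has the same numbers of positive and negative eigenvalues as Λ₂. -/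
theorem stmt17 {n1 n2 n3 : ℕ}
    (K KG : Matrix (Fin n1 ⊕ (Fin n2 ⊕ Fin n3)) (Fin n1 ⊕ (Fin n2 ⊕ Fin n3)) ℝ)
    (hK : Kᵀ = K) (hKG : KGᵀ = KG)
    (W : Matrix (Fin n1 ⊕ (Fin n2 ⊕ Fin n3)) (Fin n1 ⊕ (Fin n2 ⊕ Fin n3)) ℝ)
    (hW : IsUnit W)
    (Λ1 : Fin n1 → ℝ) (Λ2 : Fin n2 → ℝ) (hΛ2 : ∀ i, Λ2 i ≠ 0)
    (hcanKG : Wᵀ * KG * W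
      = Matrix.fromBlocks (Matrix.diagonal Λ1) 0 0
          (Matrix.fromBlocks (Matrix.diagonal Λ2) 0 0 0))
    (hcanK : Wᵀ * K * W
      = Matrix.fromBlocks (1 : Matrix (Fin n1) (Fin n1) ℝ) 0 0 0)
    (ZN : Matrix (Fin n1 ⊕ (Fin n2 ⊕ Fin n3)) (Fin n2) ℝ)
    (R22 : Matrix (Fin n2) (Fin n2) ℝ) (R32 : Matrix (Fin n3) (Fin n2) ℝ)
    (hR22 : IsUnit R22)
    (hZN : ZN = W.submatrix id (Sum.inr ∘ Sum.inl : Fin n2 → _) * R22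
      + W.submatrix id (Sum.inr ∘ Sum.inr : Fin n3 → _) * R32) :
    ZNᵀ * KG * ZN = R22ᵀ * Matrix.diagonal Λ2 * R22 ∧
    IsUnit (ZNᵀ * KG * ZN) ∧
    ∀ h : (ZNᵀ * KG * ZN).IsHermitian,
      Nat.card {i // 0 < h.eigenvalues i} = Nat.card {i // 0 < Λ2 i} ∧
      Nat.card {i // h.eigenvalues i < 0} = Nat.card {i // Λ2 i < 0} :=
  stmt17_general KG W Λ1 Λ2 hΛ2 hcanKG ZN R22 R32 hR22 hZN
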